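/- Assume δ ≤ θ ≤ α. Then there exists a constant C > 0 (depending only on δ, α, θ, ε, and independent of ξ, σ, z, w) such that for every ξ ∈ ℝⁿ with |ξ| ≥ ε, every σ ∈ ℝ, and all complex numbers z, w: E₁ ≤ C·F, where F = |ξ|^{2θ+σ}|w|² + ρ(ξ)|ξ|^{2α+σ}|z|². -/

import Mathlib

/-!
On `|ξ| ≥ ε` both branches of `ρ` are bounded below by powers of `ε`: in the first,
`|ξ|^{2θ} / (1 + |ξ|^{2δ}) ≥ ε^{2θ} / 2` because `0 ≤ δ ≤ θ`; in the second the exponent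
`2α - 2θ` is nonnegative. So `ρ ≥ c > 0` uniformly, which controls the `z`-term of `E₁`,
while the `w`-term is controlled because `|ξ|^{2δ-2θ} ≤ ε^{2δ-2θ}`.
-/

/-- The auxiliary multiplier `ρ(ξ)` used in the high frequency region. -/
noncomputable def rho (n : ℕ) (δ α θ ε : ℝ) (ξ : EuclideanSpace ℝ (Fin n)) : ℝ :=
  if 2 * θ ≤ α + δ then
    ε ^ (2 * α + 2 * δ - 4 * θ) * ‖ξ‖ ^ (2 * θ) / (2 * (1 + ‖ξ‖ ^ (2 * δ)))
  else
    ε ^ (-2 * α + 4 * θ) * ‖ξ‖ ^ (2 * α - 2 * θ) / 4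

open Real

section PowerBounds

variable {ε x : ℝ}

lemma rpow_mul_rpow_le_of_le (hε0 : 0 < ε) (hε1 : ε ≤ 1) (hεx : ε ≤ x) {a b : ℝ}
    (ha : 0 ≤ a) (hab : a ≤ b) : ε ^ b * x ^ a ≤ x ^ b := by
  have hx : 0 < x := hε0.trans_le hεx
  calc ε ^ b * x ^ a ≤ ε ^ (b - a) * x ^ a := by
        gcongr ?_ * _; exact rpow_le_rpow_of_exponent_ge hε0 hε1 (by linarith)
    _ ≤ x ^ (b - a) * x ^ a := by gcongr
    _ = x ^ b := by rw [← rpow_add hx]; ring_nf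

lemma rpow_div_two_le_rpow_div_one_add_rpow (hε0 : 0 < ε) (hε1 : ε ≤ 1) (hεx : ε ≤ x)
    {a b : ℝ} (ha : 0 ≤ a) (hab : a ≤ b) : ε ^ b / 2 ≤ x ^ b / (1 + x ^ a) := by
  have hx : 0 < x := hε0.trans_le hεx
  have hεb : ε ^ b ≤ x ^ b := rpow_le_rpow hε0.le hεx (ha.trans hab)
  have hεbxa : ε ^ b * x ^ a ≤ x ^ b := rpow_mul_rpow_le_of_le hε0 hε1 hεx ha hab
  rw [div_le_div_iff₀ two_pos (by positivity)]
  linarith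

lemma rpow_add_le_mul_rpow_add (hε0 : 0 < ε) (hεx : ε ≤ x) {a b : ℝ} (hab : a ≤ b) (σ : ℝ) :
    x ^ (a + σ) ≤ ε ^ (a - b) * x ^ (b + σ) := by
  have hx : 0 < x := hε0.trans_le hεx
  calc x ^ (a + σ) = x ^ (a - b) * x ^ (b + σ) := by rw [← rpow_add hx]; ring_nf
    _ ≤ ε ^ (a - b) * x ^ (b + σ) := by
        gcongr ?_ * _; exact rpow_le_rpow_of_nonpos hε0 hεx (by linarith)

end PowerBounds

lemma min_le_rho {n : ℕ} {δ α θ ε : ℝ} (hδ : 0 ≤ δ) (hδθ : δ ≤ θ) (hθα : θ ≤ α)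
    (hε0 : 0 < ε) (hε1 : ε ≤ 1) {ξ : EuclideanSpace ℝ (Fin n)} (hξ : ε ≤ ‖ξ‖) :
    min (ε ^ (2 * α + 2 * δ - 2 * θ) / 4) (ε ^ (2 * θ) / 4) ≤ rho n δ α θ ε ξ := by
  unfold rho
  split_ifs
  · have hquot := rpow_div_two_le_rpow_div_one_add_rpow hε0 hε1 hξ
      (a := 2 * δ) (b := 2 * θ) (by linarith) (by linarith)
    have hsplit : ε ^ (2 * α + 2 * δ - 2 * θ) = ε ^ (2 * α + 2 * δ - 4 * θ) * ε ^ (2 * θ) := by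
      rw [← rpow_add hε0]; ring_nf
    calc min (ε ^ (2 * α + 2 * δ - 2 * θ) / 4) (ε ^ (2 * θ) / 4)
        ≤ ε ^ (2 * α + 2 * δ - 4 * θ) * (ε ^ (2 * θ) / 2) / 2 := by
          rw [hsplit]; ring_nf; exact min_le_left _ _
      _ ≤ ε ^ (2 * α + 2 * δ - 4 * θ) * (‖ξ‖ ^ (2 * θ) / (1 + ‖ξ‖ ^ (2 * δ))) / 2 := by
          gcongr
      _ = _ := by field_simp
  · calc min (ε ^ (2 * α + 2 * δ - 2 * θ) / 4) (ε ^ (2 * θ) / 4)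
        ≤ ε ^ (-2 * α + 4 * θ) * ε ^ (2 * α - 2 * θ) / 4 := by
          rw [← rpow_add hε0]; ring_nf; exact min_le_right _ _
      _ ≤ _ := by gcongr; linarith

lemma add_le_max_mul_add {a b A B C₁ C₂ : ℝ} (hA : 0 ≤ A) (hB : 0 ≤ B)
    (ha : a ≤ C₁ * A) (hb : b ≤ C₂ * B) : a + b ≤ max C₁ C₂ * (A + B) := by
  calc a + b ≤ C₁ * A + C₂ * B := add_le_add ha hb
    _ ≤ max C₁ C₂ * A + max C₁ C₂ * B := by gcongr <;> simp
    _ = max C₁ C₂ * (A + B) := by ring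

theorem stmt_15_general (n : ℕ) (δ α θ ε : ℝ)
    (hδ : 0 ≤ δ) (hθα : θ ≤ α)
    (hε0 : 0 < ε) (hε1 : ε < 1) (hδθ : δ ≤ θ) :
    ∃ C : ℝ, 0 < C ∧
      ∀ ξ : EuclideanSpace ℝ (Fin n), ε ≤ ‖ξ‖ → ∀ σ : ℝ, ∀ z w : ℂ,
        1 / 2 * ‖ξ‖ ^ (2 * δ + σ) * ‖w‖ ^ 2
            + 1 / 2 * ‖ξ‖ ^ (2 * α + σ) * ‖z‖ ^ 2
          ≤ C * (‖ξ‖ ^ (2 * θ + σ) * ‖w‖ ^ 2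
            + rho n δ α θ ε ξ * ‖ξ‖ ^ (2 * α + σ) * ‖z‖ ^ 2) := by
  set c := min (ε ^ (2 * α + 2 * δ - 2 * θ) / 4) (ε ^ (2 * θ) / 4)
  have hc : 0 < c := lt_min (by positivity) (by positivity)
  refine ⟨max (ε ^ (2 * δ - 2 * θ) / 2) (1 / (2 * c)),
    lt_max_of_lt_left (by positivity), fun ξ hξ σ z w => ?_⟩
  have hρ : c ≤ rho n δ α θ ε ξ := min_le_rho hδ hδθ hθα hε0 hε1.le hξ
  have hρ0 : 0 ≤ rho n δ α θ ε ξ := hc.le.trans hρ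
  apply add_le_max_mul_add (by positivity) (by positivity)
  · calc 1 / 2 * ‖ξ‖ ^ (2 * δ + σ) * ‖w‖ ^ 2
        ≤ 1 / 2 * (ε ^ (2 * δ - 2 * θ) * ‖ξ‖ ^ (2 * θ + σ)) * ‖w‖ ^ 2 := by
          gcongr; exact rpow_add_le_mul_rpow_add hε0 hξ (by linarith) σ
      _ = _ := by ring
  · calc 1 / 2 * ‖ξ‖ ^ (2 * α + σ) * ‖z‖ ^ 2
        = 1 / (2 * c) * (c * ‖ξ‖ ^ (2 * α + σ) * ‖z‖ ^ 2) := by field_simp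
      _ ≤ _ := by gcongr

theorem stmt_15 (n : ℕ) (hn : 1 ≤ n) (δ α θ ε : ℝ)
    (hδ : 0 ≤ δ) (hα : 0 ≤ α) (hθ0 : 0 ≤ θ) (hθα : θ ≤ α)
    (hε0 : 0 < ε) (hε1 : ε < 1) (hδθ : δ ≤ θ) :
    ∃ C : ℝ, 0 < C ∧
      ∀ ξ : EuclideanSpace ℝ (Fin n), ε ≤ ‖ξ‖ → ∀ σ : ℝ, ∀ z w : ℂ,
        1 / 2 * ‖ξ‖ ^ (2 * δ + σ) * ‖w‖ ^ 2
            + 1 / 2 * ‖ξ‖ ^ (2 * α + σ) * ‖z‖ ^ 2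
          ≤ C * (‖ξ‖ ^ (2 * θ + σ) * ‖w‖ ^ 2
            + rho n δ α θ ε ξ * ‖ξ‖ ^ (2 * α + σ) * ‖z‖ ^ 2) :=
  stmt_15_general n δ α θ ε hδ hθα hε0 hε1 hδθ
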